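/- arXiv:2002.02059 — 7 statements merged into one kernel-verified Lean document; each statement's English description precedes it below -/
import Mathlib

section
/- Let a, b, x, y be natural numbers with a, b ≥ 1 and ab = x + y − 1. Then there exist natural numbers v, w ≥ 1 with v + w − 1 = a and xy ≡ vw (mod a). -/
theorem reduction_lemma (a b x y : ℕ) (ha : 1 ≤ a) (hb : 1 ≤ b)
    (hx : 1 ≤ x) (hy : 1 ≤ y) (h : a * b = x + y - 1) :
    ∃ v w : ℕ, 1 ≤ v ∧ 1 ≤ w ∧ v + w - 1 = a ∧ x * y ≡ v * w [MOD a] := by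
  set r := (x - 1) % a with hr
  have hrlt : r < a := Nat.mod_lt _ (by omega)
  refine ⟨r + 1, a - r, by omega, by omega, by omega, ?_⟩
  have h1 : x ≡ r + 1 [MOD a] := by
    have hx1 : x = (x - 1) + 1 := by omega
    calc x = (x - 1) + 1 := hx1
    _ ≡ r + 1 [MOD a] := (Nat.mod_modEq (x - 1) a).symm.add_right 1
  have hsum : x + y = a * b + 1 := by omega
  have hab : a * b + 1 ≡ 0 + 1 [MOD a] :=
    ((Nat.modEq_zero_iff_dvd).mpr ⟨b, rfl⟩).add_right 1
  have haa : a + 1 ≡ 0 + 1 [MOD a] :=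
    ((Nat.modEq_zero_iff_dvd).mpr ⟨1, (mul_one a).symm⟩).add_right 1
  have hsum2 : x + y ≡ (r + 1) + (a - r) [MOD a] := by
    have : (r + 1) + (a - r) = a + 1 := by omega
    rw [hsum, this]
    exact hab.trans haa.symm
  have h2 : y ≡ a - r [MOD a] := by
    have := hsum2
    rw [Nat.add_comm x y, Nat.add_comm (r+1) (a-r)] at this
    exact Nat.ModEq.add_right_cancel h1 this
  exact h1.mul h2
end

section
/- If n = ⟨x,y,z⟩ with x + y − 1 = ab for positive naturals a, b, and z ≥ 1, then there exist positive naturals v, w, z' with v + w − 1 = a and n = ⟨v,w,z'⟩. -/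
/-- The ternary product ⟨x,y,z⟩ = xy + yz + zx − x − y − z + 1. -/
def tern (x y z : ℕ) : ℕ := x*y + y*z + z*x - x - y - z + 1

lemma tern_succ (u v w : ℕ) : tern (u+1) (v+1) (w+1) = u*v + (w+1)*(u+v+1) := by
  unfold tern
  have h1 : (u+1)*(v+1) = u*v + u + v + 1 := by ring
  have h2 : (v+1)*(w+1) = v*w + v + w + 1 := by ring
  have h3 : (w+1)*(u+1) = w*u + w + u + 1 := by ring
  have h4 : (w+1)*(u+v+1) = w*u + v*w + u + v + w + 1 := by ring
  rw [h1, h2, h3, h4]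
  generalize u*v = A
  generalize v*w = B
  generalize w*u = C
  omega

theorem tern_reduce (n x y z a b : ℕ) (hx : 1 ≤ x) (hy : 1 ≤ y) (hz : 1 ≤ z)
    (ha : 1 ≤ a) (hb : 1 ≤ b) (hn : n = tern x y z) (hab : x + y - 1 = a * b) :
    ∃ v w z' : ℕ, 1 ≤ v ∧ 1 ≤ w ∧ 1 ≤ z' ∧ v + w - 1 = a ∧ n = tern v w z' := by
  obtain ⟨X, rfl⟩ : ∃ X, x = X + 1 := ⟨x-1, by omega⟩
  obtain ⟨Y, rfl⟩ : ∃ Y, y = Y + 1 := ⟨y-1, by omega⟩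
  obtain ⟨Z, rfl⟩ : ∃ Z, z = Z + 1 := ⟨z-1, by omega⟩
  have habXY : X + Y + 1 = a * b := by omega
  obtain ⟨p, t, hta, hX⟩ : ∃ p t, t < a ∧ X = a*p + t :=
    ⟨X/a, X%a, Nat.mod_lt _ ha, (Nat.div_add_mod X a).symm⟩
  obtain ⟨T, hT⟩ : ∃ T, a = t + T + 1 := ⟨a - t - 1, by omega⟩
  have hpb : p < b := by
    have h1 : a*p ≤ X := by linarith
    have h2 : X < a*b := by linarith
    exact lt_of_mul_lt_mul_left (by linarith) (Nat.zero_le a)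
  obtain ⟨s, hbs⟩ : ∃ s, b = s + p + 1 := ⟨b - p - 1, by omega⟩
  have hY : Y = a*s + T := by
    have h1 : a*b = a*s + a*p + a := by rw [hbs]; ring
    linarith
  refine ⟨t+1, T+1, ((Z+1)*(s+p) + Z + a*p*s + p*T + s*t) + 1,
    by omega, by omega, Nat.le_add_left 1 _, by omega, ?_⟩
  rw [hn, tern_succ, tern_succ]
  subst hX hY hT hbs
  ring
end

section
/- Every 3-prime natural number n > 1 is prime: if n has no representation n = ⟨x,y,z⟩ (with ⟨x,y,z⟩ = xy+yz+zx−x−y−z+1) where at least two of x, y, z exceed 1, then n is prime. -/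
/-- `n` is 3-prime: there is no representation `n = ⟨x,y,z⟩` with positive naturals
`x, y, z` in which at least two of the arguments exceed 1. -/
def ThreePrime (n : ℕ) : Prop :=
  ∀ x y z : ℕ, 1 ≤ x → 1 ≤ y → 1 ≤ z → tern x y z = n →
    ¬ ((1 < x ∧ 1 < y) ∨ (1 < y ∧ 1 < z) ∨ (1 < x ∧ 1 < z))

theorem threePrime_implies_prime (n : ℕ) (hn : 1 < n) (h : ThreePrime n) :
    Nat.Prime n := by
  by_contra hp
  obtain ⟨a, ha, hne1, hnen⟩ := Nat.exists_dvd_of_not_prime2 hn hp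
  obtain ⟨b, hb⟩ := ha
  have ha1 : 1 < a := hne1
  have hb1 : 1 < b := by
    rcases Nat.lt_or_ge b 2 with hb2 | hb2
    · interval_cases b <;> omega
    · omega
  refine h a b 1 (by omega) (by omega) le_rfl ?_ (Or.inl ⟨ha1, hb1⟩)
  have : 1 ≤ a * b := Nat.mul_pos (by omega) (by omega)
  simp only [tern, mul_one, one_mul]
  omega
end

section
/- A natural number n ≥ 2 is 3-prime if and only if the polynomial value x² − x + n is prime for every natural number x with 1 ≤ x ≤ n − 1. -/
lemma tern_val2 (a b c : ℕ) :
    tern (a+2) (b+2) (c+1) = a*b + b*c + c*a + 2*a + 2*b + 3*c + 4 := by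
  unfold tern
  have h : (a+2)*(b+2) + (b+2)*(c+1) + (c+1)*(a+2)
      = a*b + b*c + c*a + 3*a + 3*b + 4*c + 8 := by ring
  rw [h]
  omega

lemma tern_perm1 (x y z : ℕ) : tern x y z = tern y z x := by
  unfold tern
  have h1 : x*y + y*z + z*x = y*z + z*x + x*y := by ring
  rw [h1]
  omega

lemma tern_perm2 (x y z : ℕ) : tern x y z = tern x z y := by
  unfold tern
  have h1 : x*y + y*z + z*x = x*z + z*y + y*x := by ring
  rw [h1]
  omega

lemma sq_sub (c n : ℕ) : (c+1)^2 - (c+1) + n = c*c + c + n := by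
  rw [show (c+1)^2 = c*c + c + (c+1) from by ring, Nat.add_sub_cancel]

/-- Descent: if `c*c + c + n` is composite for some `c` with `c+1 < n`, then `n` has a
representation with two arguments `≥ 2`. -/
lemma descent (n : ℕ) (hn : 2 ≤ n) :
    ∀ c, c + 1 < n → ¬ (c*c + c + n).Prime →
      ∃ x y w, 2 ≤ x ∧ 2 ≤ y ∧ 1 ≤ w ∧ tern x y w = n := by
  intro c
  induction c using Nat.strong_induction_on with
  | _ c ih =>
    intro hcn hm
    set m := c*c + c + n with hmdef
    have hm2 : 2 ≤ m := by omega
    set p := m.minFac with hpdef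
    have hp : p.Prime := Nat.minFac_prime (by omega)
    have hpd : p ∣ m := Nat.minFac_dvd m
    have hp2 : 2 ≤ p := hp.two_le
    have hpp : p * p ≤ m := by
      have h := Nat.minFac_sq_le_self (by omega : 0 < m) hm
      rw [← hpdef] at h
      have h2 : p^2 = p*p := by ring
      omega
    set B := m / p with hBdef
    have hB : p * B = m := Nat.mul_div_cancel' hpd
    have hBp : p ≤ B := by
      by_contra hlt
      push_neg at hlt
      have h1 : p * (B+1) ≤ p * p := Nat.mul_le_mul (le_refl p) (by omega)
      have h2 : p * (B+1) = p * B + p := by ring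
      omega
    by_cases hc : c + 2 ≤ p
    · -- the small factor exceeds z = c+1: direct representation
      refine ⟨p - c, B - c, c + 1, by omega, by omega, by omega, ?_⟩
      obtain ⟨a, ha⟩ : ∃ a, p - c = a + 2 := ⟨p - c - 2, by omega⟩
      obtain ⟨b, hb⟩ : ∃ b, B - c = b + 2 := ⟨B - c - 2, by omega⟩
      rw [ha, hb, tern_val2]
      have hA : a + c + 2 = p := by omega
      have hBb : b + c + 2 = B := by omega
      have hprod : (a+c+2) * (b+c+2) = m := by rw [hA, hBb, hB]
      have hexp : (a+c+2) * (b+c+2)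
          = a*b + b*c + c*a + c*c + 2*a + 2*b + 4*c + 4 := by ring
      omega
    · -- the small factor is ≤ z: descend
      push_neg at hc
      set c' := c % p with hc'def
      have hc'le : c' ≤ c := Nat.mod_le c p
      have hdm : p * (c / p) + c % p = c := Nat.div_add_mod c p
      set t := c - c' with htdef
      have htp : t = p * (c / p) := by omega
      have hct : c = c' + t := by omega
      have key : (c'+t)*(c'+t) + (c'+t) + n
          = (c'*c' + c' + n) + t*((c'+t) + c' + 1) := by ring
      set m' := c'*c' + c' + n with hm'def
      have hmm' : m = m' + t*(c + c' + 1) := by rw [hmdef, hm'def]; rw [hct]; exact key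
      have hpt : p ∣ t := ⟨c / p, htp⟩
      have hpm' : p ∣ m' := by
        have h1 : p ∣ t * (c + c' + 1) := hpt.mul_right _
        have h2 : m - t * (c + c' + 1) = m' := by omega
        have := Nat.dvd_sub hpd h1
        rwa [h2] at this
      have hm'n : n ≤ m' := by omega
      have hpltm' : p < m' := by omega
      have hm'np : ¬ m'.Prime := by
        intro hpr
        rcases (hpr.eq_one_or_self_of_dvd p hpm') with h | h <;> omega
      by_cases hlt : c' < c
      · exact ih c' hlt (by omega) hm'np
      · -- c' = c, so c < p ≤ c + 1, hence p = c + 1 and p ∣ n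
        have hcc : c' = c := by omega
        have hcp : c < p := by
          have := Nat.mod_lt c (show 0 < p by omega)
          omega
        have hpc1 : p = c + 1 := by omega
        have hpn : p ∣ n := by
          have h1 : c * c + c = c * p := by rw [hpc1]; ring
          have h2 : p ∣ c * p := ⟨c, by ring⟩
          have h3 : p ∣ c*c + c + n := hpd
          have : p ∣ n := (Nat.dvd_add_right (h1 ▸ h2)).mp h3
          exact this
        obtain ⟨k, hk⟩ := hpn
        have hk2 : 2 ≤ k := by
          rcases Nat.lt_or_ge k 2 with h | h
          · interval_cases k <;> omega
          · exact h
        refine ⟨p, k, 1, hp2, hk2, le_refl 1, ?_⟩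
        obtain ⟨a, ha⟩ : ∃ a, p = a + 2 := ⟨p - 2, by omega⟩
        obtain ⟨b, hb⟩ : ∃ b, k = b + 2 := ⟨k - 2, by omega⟩
        rw [ha, hb, show (1:ℕ) = 0 + 1 from rfl, tern_val2]
        have hpk : p * k = a*b + 2*a + 2*b + 4 := by rw [ha, hb]; ring
        omega

/-- If there is a representation with the first two arguments `≥ 2`, some polynomial value
is composite — contradiction with the primality hypothesis. -/
lemma core (n a b c : ℕ) (hn : 2 ≤ n) (heq : tern (a+2) (b+2) (c+1) = n)
    (h : ∀ w : ℕ, 1 ≤ w → w ≤ n - 1 → Nat.Prime (w^2 - w + n)) : False := by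
  rw [tern_val2] at heq
  have hcn : c + 2 ≤ n := by omega
  have hp := h (c+1) (by omega) (by omega)
  rw [sq_sub] at hp
  have factor : c*c + c + n = (a+c+2) * (b+c+2) := by
    rw [← heq]; ring
  have hd : (a+c+2) ∣ (c*c + c + n) := ⟨b+c+2, factor⟩
  rcases hp.eq_one_or_self_of_dvd _ hd with h1 | h1
  · omega
  · have hexp : (a+c+2) * (b+c+2)
        = a*b + b*c + c*a + c*c + 2*a + 2*b + 4*c + 4 := by ring
    omega

theorem threePrime_iff_poly_prime (n : ℕ) (hn : 2 ≤ n) :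
    ThreePrime n ↔ ∀ x : ℕ, 1 ≤ x → x ≤ n - 1 → Nat.Prime (x^2 - x + n) := by
  constructor
  · intro h3 w hw1 hw2
    by_contra hnp
    obtain ⟨c, rfl⟩ : ∃ c, w = c + 1 := ⟨w - 1, by omega⟩
    rw [sq_sub] at hnp
    obtain ⟨x, y, w', hx, hy, hw', heq⟩ := descent n hn c (by omega) hnp
    exact h3 x y w' (by omega) (by omega) hw' heq (Or.inl ⟨by omega, by omega⟩)
  · intro h x y z hx hy hz heq hcon
    rcases hcon with ⟨h1, h2⟩ | ⟨h1, h2⟩ | ⟨h1, h2⟩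
    · obtain ⟨a, rfl⟩ : ∃ a, x = a + 2 := ⟨x - 2, by omega⟩
      obtain ⟨b, rfl⟩ : ∃ b, y = b + 2 := ⟨y - 2, by omega⟩
      obtain ⟨c, rfl⟩ : ∃ c, z = c + 1 := ⟨z - 1, by omega⟩
      exact core n a b c hn heq h
    · rw [tern_perm1] at heq
      obtain ⟨a, rfl⟩ : ∃ a, y = a + 2 := ⟨y - 2, by omega⟩
      obtain ⟨b, rfl⟩ : ∃ b, z = b + 2 := ⟨z - 2, by omega⟩
      obtain ⟨c, rfl⟩ : ∃ c, x = c + 1 := ⟨x - 1, by omega⟩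
      exact core n a b c hn heq h
    · rw [tern_perm2] at heq
      obtain ⟨a, rfl⟩ : ∃ a, x = a + 2 := ⟨x - 2, by omega⟩
      obtain ⟨b, rfl⟩ : ∃ b, z = b + 2 := ⟨z - 2, by omega⟩
      obtain ⟨c, rfl⟩ : ∃ c, y = c + 1 := ⟨y - 1, by omega⟩
      exact core n a b c hn heq h
end

section
/- Let n = p·r be odd with p, r ≥ 3. Then there exist distinct natural numbers x, w with 1 ≤ x, w ≤ (n+1)/2 such that x(n+1−x) ≡ w(n+1−w) (mod n). -/
lemma key_pair (a b : ℕ) (ha : 1 ≤ a) (hab : a ≤ b) :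
    ∃ x w : ℕ, x ≠ w ∧ 1 ≤ x ∧ x ≤ ((2*a+1)*(2*b+1) + 1) / 2 ∧ 1 ≤ w ∧
      w ≤ ((2*a+1)*(2*b+1) + 1) / 2 ∧
      x * ((2*a+1)*(2*b+1) + 1 - x) ≡ w * ((2*a+1)*(2*b+1) + 1 - w)
        [MOD (2*a+1)*(2*b+1)] := by
  set n := (2*a+1)*(2*b+1) with hn
  have hab1 : a ≤ a * b := Nat.le_mul_of_pos_right a (by omega)
  have hab2 : b ≤ a * b := Nat.le_mul_of_pos_left b (by omega)
  have hnval : n = 4*(a*b) + 2*a + 2*b + 1 := by rw [hn]; ring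
  refine ⟨2*b+1 - a, 2*b+1 + a + 1, by omega, by omega, by omega, by omega, by omega, ?_⟩
  have heq : (2*b+1 + a + 1) * (n + 1 - (2*b+1 + a + 1)) =
      (2*b+1 - a) * (n + 1 - (2*b+1 - a)) + n * (2*a - 1) := by
    have h1 : n + 1 - (2*b+1 + a + 1) = 4*(a*b) + a := by omega
    have h2 : n + 1 - (2*b+1 - a) = 4*(a*b) + 3*a + 1 := by omega
    rw [h1, h2, hnval]
    zify [show a ≤ 2*b+1 by omega, show 1 ≤ 2*a by omega]
    ring
  show _ % n = _ % n
  rw [heq, Nat.add_mul_mod_self_left]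

theorem exists_congruent_pair (n p r : ℕ) (hn : n = p * r) (hodd : Odd n)
    (hp : 3 ≤ p) (hr : 3 ≤ r) :
    ∃ x w : ℕ, x ≠ w ∧ 1 ≤ x ∧ x ≤ (n + 1) / 2 ∧ 1 ≤ w ∧ w ≤ (n + 1) / 2 ∧
      x * (n + 1 - x) ≡ w * (n + 1 - w) [MOD n] := by
  have hop : Odd p := by
    rcases Nat.even_or_odd p with h | h
    · exact absurd (hn ▸ h.mul_right r) (Nat.not_even_iff_odd.mpr hodd)
    · exact h
  have hor : Odd r := by
    rcases Nat.even_or_odd r with h | h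
    · exact absurd (hn ▸ h.mul_left p) (Nat.not_even_iff_odd.mpr hodd)
    · exact h
  obtain ⟨a, rfl⟩ := hop
  obtain ⟨b, rfl⟩ := hor
  rcases le_total a b with hab | hab
  · have := key_pair a b (by omega) hab
    rwa [← hn] at this
  · have := key_pair b a (by omega) hab
    rw [show (2*b+1)*(2*a+1) = n by rw [hn]; ring] at this
    exact this
end

section
/- An odd natural number n > 1 is prime if and only if the residues x(n+1−x) mod n are pairwise distinct for x ranging over 1, 2, ..., (n+1)/2. -/
set_option maxHeartbeats 1600000 in
theorem prime_iff_distinct_residues (n : ℕ) (hodd : Odd n) (hn : 1 < n) :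
    Nat.Prime n ↔
      ∀ x w : ℕ, 1 ≤ x → x ≤ (n + 1) / 2 → 1 ≤ w → w ≤ (n + 1) / 2 →
        x * (n + 1 - x) ≡ w * (n + 1 - w) [MOD n] → x = w := by
  obtain ⟨k, hk⟩ := hodd
  constructor
  · intro hp x w hx1 hx2 hw1 hw2 hmod
    rw [Nat.modEq_iff_dvd] at hmod
    have c1 : ((n + 1 - x : ℕ) : ℤ) = (n : ℤ) + 1 - x := by omega
    have c2 : ((n + 1 - w : ℕ) : ℤ) = (n : ℤ) + 1 - w := by omega
    rw [Nat.cast_mul, Nat.cast_mul, c1, c2] at hmod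
    have hd2 : (n : ℤ) ∣ ((w : ℤ) - x) * (1 - (w + x)) := by
      obtain ⟨t, ht⟩ := hmod
      exact ⟨t - ((w : ℤ) - x), by linear_combination ht⟩
    have hpz : Prime (n : ℤ) := Nat.prime_iff_prime_int.mp hp
    rcases hpz.2.2 _ _ hd2 with hA | hB
    · have h0 : (w : ℤ) - x = 0 := by
        refine Int.eq_zero_of_abs_lt_dvd hA ?_
        rw [abs_sub_lt_iff]
        constructor <;> push_cast <;> omega
      omega
    · obtain ⟨t, ht⟩ := hB
      have : (1 : ℤ) - (w + x) = n * t := ht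
      -- x + w - 1 is divisible by n, with 1 ≤ x+w-1 ≤ n, so x+w = n+1
      have hdvd : (n : ℤ) ∣ ((w : ℤ) + x - 1) := ⟨-t, by linarith⟩
      have hle : (w : ℤ) + x - 1 ≤ n := by push_cast; omega
      have hpos : 0 < (w : ℤ) + x - 1 := by push_cast; omega
      have := Int.le_of_dvd hpos hdvd
      have heq : (w : ℤ) + x - 1 = n := le_antisymm hle this
      push_cast at heq
      omega
  · intro h
    by_contra hnp
    have hp : (n.minFac).Prime := Nat.minFac_prime (by omega)
    obtain ⟨m, hm⟩ := n.minFac_dvd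
    set p := n.minFac with hpdef
    have hpsq : p * p ≤ n := by
      have := Nat.minFac_sq_le_self (by omega) hnp
      simpa [pow_two] using this
    have hoddn : Odd (p * m) := hm ▸ ⟨k, hk⟩
    have hpodd : p % 2 = 1 := by
      rcases Nat.odd_mul.mp hoddn with ⟨⟨a, ha⟩, _⟩; omega
    have hmodd : m % 2 = 1 := by
      rcases Nat.odd_mul.mp hoddn with ⟨_, ⟨a, ha⟩⟩; omega
    have hp2 : 2 ≤ p := hp.two_le
    have hp3 : 3 ≤ p := by omega
    have hmp : p ≤ m := by nlinarith
    clear_value p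
    set r := m % p with hr_def
    have hr : r < p := Nat.mod_lt _ (by omega)
    have hrm : r ≤ m := Nat.mod_le _ _
    have hA : p ∣ m - r := Nat.dvd_sub_mod m
    clear_value r
    set u := p + 1 - r with hu_def
    clear_value u
    have hu1 : 2 ≤ u := by omega
    have hu2 : u ≤ p + 1 := by omega
    obtain ⟨x, hx⟩ : ∃ x, 2 * x = u ∨ 2 * x = u + p := by
      have h2 : u % 2 = 0 ∨ (u + p) % 2 = 0 := by omega
      rcases h2 with h' | h'
      · exact ⟨u / 2, Or.inl (by omega)⟩
      · exact ⟨(u + p) / 2, Or.inr (by omega)⟩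
    have hx1 : 1 ≤ x := by omega
    -- p ∣ 2x + m - 1
    obtain ⟨a, ha⟩ := hA
    obtain ⟨c, hc⟩ : ∃ c, 2 * x + m - 1 = p * c := by
      have e1 : p * (a + 1) = p * a + p := by ring
      have e2 : p * (a + 2) = p * a + 2 * p := by ring
      rcases hx with hx | hx
      · exact ⟨a + 1, by omega⟩
      · exact ⟨a + 2, by omega⟩
    -- bound: 2 * (x + m) ≤ n + 1
    have hwb : 2 * (x + m) ≤ n + 1 := by
      rcases eq_or_ne r 1 with hr1 | hr1
      · -- u = p, so 2x = 2p (since p odd), x = p; and m ≥ 2p+1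
        have hxp : x = p := by omega
        have hm2p : 2 * p + 1 ≤ m := by
          -- m - 1 = p * a, a ≥ 1, a ≠ 1 (parity), so a ≥ 2
          have ha1 : 1 ≤ a := by
            rcases Nat.eq_zero_or_pos a with rfl | h'
            · simp at ha; omega
            · exact h'
          have ha2 : a ≠ 1 := by
            rintro rfl
            omega
          have h2a : 2 ≤ a := by omega
          have : p * 2 ≤ p * a := Nat.mul_le_mul le_rfl h2a
          omega
        rw [hm]
        have hZ1 : ((p : ℤ) - 2) * ((m : ℤ) - (2 * p + 1)) ≥ 0 := by
          apply mul_nonneg <;> push_cast <;> omega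
        have hZ3 : ((p : ℤ) - 3) * (p : ℤ) ≥ 0 := by
          apply mul_nonneg <;> push_cast <;> omega
        have : 2 * ((x : ℤ) + m) ≤ (p : ℤ) * m + 1 := by
          have hxp' : (x : ℤ) = p := by exact_mod_cast hxp
          have h2p' : 2 * (p : ℤ) + 1 ≤ m := by exact_mod_cast hm2p
          nlinarith [hZ1, hZ3]
        exact_mod_cast this
      · have hxp : x + 1 ≤ p := by omega
        rw [hm]
        have hZ1 : ((p : ℤ) - 3) * ((m : ℤ) - p) ≥ 0 := by
          apply mul_nonneg <;> push_cast <;> omega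
        have hZ2 : ((p : ℤ) - 1) * ((p : ℤ) - 3) ≥ 0 := by
          apply mul_nonneg <;> push_cast <;> omega
        have : 2 * ((x : ℤ) + m) ≤ (p : ℤ) * m + 1 := by
          have hxp' : (x : ℤ) + 1 ≤ p := by exact_mod_cast hxp
          have hmp' : (p : ℤ) ≤ m := by exact_mod_cast hmp
          nlinarith [hZ1, hZ2]
        exact_mod_cast this
    set w := x + m with hw_def
    clear_value w
    have hkey : x * (n + 1 - x) ≡ w * (n + 1 - w) [MOD n] := by
      rw [Nat.modEq_iff_dvd]
      have hxle : x ≤ n + 1 := by omega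
      have hwle : w ≤ n + 1 := by omega
      have c1 : ((n + 1 - x : ℕ) : ℤ) = (n : ℤ) + 1 - x := by omega
      have c2 : ((n + 1 - w : ℕ) : ℤ) = (n : ℤ) + 1 - w := by omega
      rw [Nat.cast_mul, Nat.cast_mul, c1, c2]
      have hnz : (n : ℤ) = p * m := by exact_mod_cast hm
      have hcz : 2 * (x : ℤ) + m - 1 = p * c := by
        have h1 : 1 ≤ 2 * x + m := by omega
        have := hc
        zify [h1] at this
        linarith
      have hwz : (w : ℤ) = x + m := by push_cast [hw_def]; ring
      exact ⟨(m : ℤ) - c, by rw [hwz]; linear_combination (-(m : ℤ)) * hcz + (c : ℤ) * hnz⟩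
    have := h x w hx1 (by omega) (by omega) (by omega) hkey
    omega
end

section
/- Let n > 3 be a natural number and k, l distinct natural numbers with 0 ≤ k, l ≤ (n−1)/2. If n divides l(l+1) − k(k+1), then gcd(l−k, n) > 1 and gcd(l+k+1, n) > 1 (interpreting l−k as the absolute difference). -/
theorem gcd_from_repetition (n k l : ℕ) (hn : 3 < n) (hkl : k ≠ l)
    (hk : k ≤ (n - 1) / 2) (hl : l ≤ (n - 1) / 2)
    (hdvd : (n : ℤ) ∣ ((l : ℤ) * ((l : ℤ) + 1) - (k : ℤ) * ((k : ℤ) + 1))) :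
    1 < Nat.gcd ((l : ℤ) - (k : ℤ)).natAbs n ∧ 1 < Nat.gcd (l + k + 1) n := by
  have hfac : ((l : ℤ) - k) * ((l : ℤ) + k + 1) =
      (l : ℤ) * ((l : ℤ) + 1) - (k : ℤ) * ((k : ℤ) + 1) := by ring
  have hdn : (n : ℤ) ∣ ((l : ℤ) - k) * ((l : ℤ) + k + 1) := hfac ▸ hdvd
  have hnat : n ∣ ((l : ℤ) - (k : ℤ)).natAbs * (l + k + 1) := by
    have h1 := Int.natAbs_dvd_natAbs.mpr hdn
    have h2 : ((l : ℤ) + k + 1).natAbs = l + k + 1 := by omega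
    simpa [Int.natAbs_mul, h2] using h1
  have hd0 : 0 < ((l : ℤ) - (k : ℤ)).natAbs := by omega
  have hdlt : ((l : ℤ) - (k : ℤ)).natAbs < n := by omega
  have hsum : 0 < l + k + 1 := by omega
  have hsumlt : l + k + 1 < n := by omega
  constructor
  · by_contra h
    push_neg at h
    have hgpos : 0 < Nat.gcd ((l : ℤ) - (k : ℤ)).natAbs n :=
      Nat.gcd_pos_of_pos_right _ (by omega)
    have hcop : Nat.Coprime ((l : ℤ) - (k : ℤ)).natAbs n := by
      unfold Nat.Coprime; omega
    have hdvd' : n ∣ l + k + 1 := hcop.symm.dvd_of_dvd_mul_left hnat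
    exact absurd (Nat.le_of_dvd hsum hdvd') (by omega)
  · by_contra h
    push_neg at h
    have hgpos : 0 < Nat.gcd (l + k + 1) n :=
      Nat.gcd_pos_of_pos_right _ (by omega)
    have hcop : Nat.Coprime (l + k + 1) n := by
      unfold Nat.Coprime; omega
    have hdvd' : n ∣ ((l : ℤ) - (k : ℤ)).natAbs := hcop.symm.dvd_of_dvd_mul_right hnat
    exact absurd (Nat.le_of_dvd hd0 hdvd') (by omega)
end
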